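/- Stochastic strict server yields stochastic service curve: suppose a server with input A and output A* satisfies, during any backlogged period [s₀, s) (a maximal interval during which A(u) > A*(u) for s₀ < u ≤ s, with A(s₀) = A*(s₀)), A*(s₀, s) ≥ β̂(s − s₀) − I(s₀, s), where β̂ is a function with β̂(0) ≤ 0 and I is a non-decreasing impairment process with I(0) = 0. Let γ be a curve and set β(t) = β̂(t) − γ(t). Then for all t, sup_{0 ≤ s ≤ t} [(A ⊗ β)(s) − A*(s)] ≤ max(0, sup_{0 ≤ s ≤ t} sup_{0 ≤ u ≤ s} [I(u,s) − γ(s−u)]). Consequently, if I ∼_mb ⟨g, γ⟩ then the server provides stochastic service curve ⟨g, β⟩. -/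

import Mathlib

/-! A time at which the server is not backlogged is the start of a degenerate backlogged period
`[s, s]`, thanks to `βh 0 ≤ 0`. So every `s` has a start `s₀ ≤ s` with `A s₀ = As s₀`, and
`(A ⊗ β)(s) ≤ A s₀ + βh (s - s₀) - γ (s - s₀)` together with the strict-service inequality gives
`(A ⊗ β)(s) - As s ≤ I(s₀, s) - γ (s - s₀)`, a term of the impairment supremum. The stochastic
bound then follows by monotonicity of the measure. -/

open MeasureTheory

noncomputable def ssup (t : ℕ) (f : ℕ → ℝ) : ℝ :=
  (Finset.range (t + 1)).sup' Finset.nonempty_range_add_one f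

noncomputable def pconv (A β : ℕ → ℝ) (t : ℕ) : ℝ :=
  (Finset.range (t + 1)).inf' Finset.nonempty_range_add_one (fun s => A s + β (t - s))

/-- m.b.c stochastic arrival curve. -/
def mbcP {Ω : Type*} [MeasurableSpace Ω] (μ : Measure Ω)
    (A : Ω → ℕ → ℝ) (f : ℝ → ℝ) (α : ℕ → ℝ) : Prop :=
  ∀ t : ℕ, ∀ x : ℝ, 0 ≤ x →
    μ {ω | ssup t (fun s => ssup s (fun u => A ω s - A ω u - α (s - u))) > x} ≤
      ENNReal.ofReal (f x)

/-- Stochastic service curve. -/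
def sscP {Ω : Type*} [MeasurableSpace Ω] (μ : Measure Ω)
    (A As : Ω → ℕ → ℝ) (g : ℝ → ℝ) (β : ℕ → ℝ) : Prop :=
  ∀ t : ℕ, ∀ x : ℝ, 0 ≤ x →
    μ {ω | ssup t (fun s => pconv (A ω) β s - As ω s) > x} ≤ ENNReal.ofReal (g x)

lemma le_ssup {t s : ℕ} (f : ℕ → ℝ) (hs : s ≤ t) : f s ≤ ssup t f :=
  Finset.le_sup' f (Finset.mem_range.mpr (Nat.lt_succ_of_le hs))

lemma ssup_le_iff {t : ℕ} {f : ℕ → ℝ} {c : ℝ} : ssup t f ≤ c ↔ ∀ s ≤ t, f s ≤ c := by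
  simp only [ssup, Finset.sup'_le_iff, Finset.mem_range, Nat.lt_succ_iff]

lemma ssup_mono {t : ℕ} {f g : ℕ → ℝ} (h : ∀ s ≤ t, f s ≤ g s) : ssup t f ≤ ssup t g :=
  ssup_le_iff.mpr fun s hs => (h s hs).trans (le_ssup g hs)

lemma pconv_le {A β : ℕ → ℝ} {t s : ℕ} (hs : s ≤ t) : pconv A β t ≤ A s + β (t - s) :=
  Finset.inf'_le (fun s => A s + β (t - s)) (Finset.mem_range.mpr (Nat.lt_succ_of_le hs))

/-- `s₀` is the start of a backlogged period containing `s`, and `I s - I s₀` is `I(s₀, s)`. -/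
def IsStrictServer (A As I βh : ℕ → ℝ) : Prop :=
  ∀ s : ℕ, A s = As s ∨
    ∃ s₀ ≤ s, A s₀ = As s₀ ∧ As s - As s₀ ≥ βh (s - s₀) - (I s - I s₀)

namespace IsStrictServer

variable {A As I βh : ℕ → ℝ}

lemma exists_backlog_start (h : IsStrictServer A As I βh) (hβh0 : βh 0 ≤ 0) (s : ℕ) :
    ∃ s₀ ≤ s, A s₀ = As s₀ ∧ βh (s - s₀) - (I s - I s₀) ≤ As s - As s₀ := by
  rcases h s with hs | hs
  · exact ⟨s, le_rfl, hs, by simpa using hβh0⟩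
  · exact hs

lemma pconv_sub_le (h : IsStrictServer A As I βh) (hβh0 : βh 0 ≤ 0) (γ : ℕ → ℝ) (s : ℕ) :
    pconv A (fun n => βh n - γ n) s - As s ≤ ssup s (fun u => I s - I u - γ (s - u)) := by
  obtain ⟨s₀, hs₀, hA, hservice⟩ := h.exists_backlog_start hβh0 s
  have hconv : pconv A (fun n => βh n - γ n) s ≤ A s₀ + (βh (s - s₀) - γ (s - s₀)) :=
    pconv_le hs₀
  have himp := le_ssup (fun u => I s - I u - γ (s - u)) hs₀
  linarith

lemma ssup_pconv_sub_le (h : IsStrictServer A As I βh) (hβh0 : βh 0 ≤ 0) (γ : ℕ → ℝ) (t : ℕ) :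
    ssup t (fun s => pconv A (fun n => βh n - γ n) s - As s) ≤
      ssup t (fun s => ssup s (fun u => I s - I u - γ (s - u))) :=
  ssup_mono fun s _ => h.pconv_sub_le hβh0 γ s

end IsStrictServer

theorem stmt19_general {Ω : Type*} [MeasurableSpace Ω] (μ : Measure Ω)
    (A As I : Ω → ℕ → ℝ) (βh γ : ℕ → ℝ) (g : ℝ → ℝ)
    (hβh0 : βh 0 ≤ 0)
    (hstrict : ∀ ω, ∀ s : ℕ, A ω s = As ω s ∨
      ∃ s₀ ≤ s, A ω s₀ = As ω s₀ ∧
        As ω s - As ω s₀ ≥ βh (s - s₀) - (I ω s - I ω s₀)) :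
    (∀ ω t, ssup t (fun s => pconv (A ω) (fun n => βh n - γ n) s - As ω s) ≤
        max 0 (ssup t (fun s => ssup s (fun u => I ω s - I ω u - γ (s - u))))) ∧
    (mbcP μ I g γ → sscP μ A As g (fun n => βh n - γ n)) := by
  have hbound ω t := IsStrictServer.ssup_pconv_sub_le (hstrict ω) hβh0 γ t
  refine ⟨fun ω t => (hbound ω t).trans (le_max_right _ _), fun hmbc t x hx => ?_⟩
  refine (μ.mono fun ω hω => ?_).trans (hmbc t x hx)
  exact lt_of_lt_of_le hω (hbound ω t)

theorem stmt19 {Ω : Type*} [MeasurableSpace Ω] (μ : Measure Ω)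
    [IsProbabilityMeasure μ] (A As I : Ω → ℕ → ℝ) (βh γ : ℕ → ℝ) (g : ℝ → ℝ)
    (hA0 : ∀ ω, A ω 0 = 0) (hAs0 : ∀ ω, As ω 0 = 0) (hI0 : ∀ ω, I ω 0 = 0)
    (hAsle : ∀ ω t, As ω t ≤ A ω t)
    (hAsmono : ∀ ω, Monotone (As ω)) (hImono : ∀ ω, Monotone (I ω))
    (hβh0 : βh 0 ≤ 0)
    (hstrict : ∀ ω, ∀ s : ℕ, A ω s = As ω s ∨
      ∃ s₀ ≤ s, A ω s₀ = As ω s₀ ∧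
        As ω s - As ω s₀ ≥ βh (s - s₀) - (I ω s - I ω s₀)) :
    (∀ ω t, ssup t (fun s => pconv (A ω) (fun n => βh n - γ n) s - As ω s) ≤
        max 0 (ssup t (fun s => ssup s (fun u => I ω s - I ω u - γ (s - u))))) ∧
    (mbcP μ I g γ → sscP μ A As g (fun n => βh n - γ n)) :=
  stmt19_general μ A As I βh γ g hβh0 hstrict
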